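/- arXiv:1204.3015 — 2 statements merged into one kernel-verified Lean document; each statement's English description precedes it below -/
import Mathlib

section
/- Let T = {E₁ − E₂, E₂ − E₃, E₃ − E₄, E₄ − E₅, E₅ − E₆, 2L − E₁ − E₂ − E₃ − E₄ − E₅ − E₆} (the configuration type A₁A₅c). Then the torsion subgroup of V/⟨T⟩, where ⟨T⟩ is the subgroup of V generated by T, is isomorphic to ℤ/2ℤ. -/
/-!
`V ⧸ ⟨T⟩ ≅ ℤ × ℤ/2`: every class in `T` is orthogonal to the canonical class `K` and has even
`⟨L, ·⟩`, and conversely a class with `⟨K, x⟩ = 0` and `⟨L, x⟩` even is an explicit integral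
combination of `T`. Hence `x ↦ (−⟨K, x⟩, ⟨L, x⟩ mod 2)` is a surjection `V → ℤ × ℤ/2` with
kernel `⟨T⟩`, and the torsion of `ℤ × ℤ/2` is `ℤ/2`.
-/

/-- `V = ℤ⁷`, with coordinate 0 corresponding to `L` and coordinates 1,…,6 to `E₁,…,E₆`. -/
abbrev V : Type := Fin 7 → ℤ

def form (x y : V) : ℤ := x 0 * y 0 - ∑ i : Fin 6, x i.succ * y i.succ

def Lv : V := fun j => if j = 0 then 1 else 0

def Ev (i : Fin 6) : V := fun j => if j = i.succ then 1 else 0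

def Kv : V := -(3 : ℤ) • Lv + ∑ i : Fin 6, Ev i

def Vpp : Set V := {v | ∃ i j : Fin 6, i < j ∧ v = Ev i - Ev j}

def Lpp : Set V := {v | ∃ i j k : Fin 6, i < j ∧ j < k ∧ v = Lv - Ev i - Ev j - Ev k}

def Qpp : Set V := {v | v = (2 : ℤ) • Lv - ∑ i : Fin 6, Ev i}

def Rset : Set V := Vpp ∪ Lpp ∪ Qpp

def PairwiseNonneg (T : Set V) : Prop := ∀ C ∈ T, ∀ D ∈ T, C ≠ D → 0 ≤ form C D

open AddCommGroup

section Torsion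

variable {G H : Type*} [AddCommGroup G] [AddCommGroup H]

lemma AddCommGroup.torsion_prod : torsion (G × H) = (torsion G).prod (torsion H) := by
  ext
  simp [AddSubgroup.mem_prod, mem_torsion, IsOfFinAddOrder.prod_iff]

def AddEquiv.torsionCongr (e : G ≃+ H) : torsion G ≃+ torsion H :=
  (e.addSubgroupMap (torsion G)).trans (AddEquiv.addSubgroupCongr e.map_torsion)

def torsionProdEquivOfIsAddTorsion [IsAddTorsionFree G] (hH : IsAddTorsion H) :
    torsion (G × H) ≃+ H :=
  have htors : torsion (G × H) = (⊥ : AddSubgroup G).prod ⊤ := by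
    rw [torsion_prod, isAddTorsionFree_iff_torsion_eq_bot.mp inferInstance,
      torsion_eq_top_iff.mpr hH]
  (AddEquiv.addSubgroupCongr htors).trans <|
    ((AddSubgroup.prodEquiv ⊥ ⊤).trans AddEquiv.uniqueProd).trans AddSubgroup.topEquiv

end Torsion

def configA1A5c : Set V :=
  {Ev 0 - Ev 1, Ev 1 - Ev 2, Ev 2 - Ev 3, Ev 3 - Ev 4, Ev 4 - Ev 5,
    (2 : ℤ) • Lv - ∑ i : Fin 6, Ev i}

lemma form_add_right (x y z : V) : form x (y + z) = form x y + form x z := by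
  simp only [form, Pi.add_apply, mul_add, Finset.sum_add_distrib]
  ring

lemma form_Kv (x : V) : form Kv x = -(3 * x 0 + ∑ i : Fin 6, x i.succ) := by
  simp [form, Kv, Lv, Ev, Fin.sum_univ_six]
  ring

lemma form_Lv (x : V) : form Lv x = x 0 := by
  simp [form, Lv]

def degreeParity : V →+ ℤ × ZMod 2 where
  toFun x := (-form Kv x, (form Lv x : ZMod 2))
  map_zero' := by simp [form]
  map_add' x y := by
    simp only [form_add_right, neg_add, Int.cast_add, Prod.mk_add_mk]

lemma degreeParity_surjective : Function.Surjective degreeParity := by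
  rintro ⟨n, a⟩
  have hL : degreeParity Lv = (3, 1) := by decide
  have hE : degreeParity (Ev 0) = (1, 0) := by decide
  refine ⟨(a.val : ℤ) • Lv + (n - 3 * a.val) • Ev 0, ?_⟩
  simp only [map_add, map_zsmul, hL, hE]
  ext
  · simp only [Prod.fst_add, Prod.smul_fst, smul_eq_mul]
    ring
  · simp

lemma mem_closure_configA1A5c {x : V} (hK : form Kv x = 0) (hL : Even (form Lv x)) :
    x ∈ AddSubgroup.closure configA1A5c := by
  have hsum : 3 * x 0 + x 1 + x 2 + x 3 + x 4 + x 5 + x 6 = 0 := by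
    simp only [form_Kv, Fin.sum_univ_six, Fin.succ_zero_eq_one, Fin.succ_one_eq_two,
      Fin.reduceSucc] at hK
    linarith
  obtain ⟨t, ht⟩ := hL
  rw [form_Lv] at ht
  -- `x - t • (2L - ΣEᵢ)` has zero `L`-coordinate and coordinate sum zero, so it is the
  -- combination of the `Eᵢ - Eᵢ₊₁` whose coefficients are its partial sums.
  have hx : x = (x 1 + t) • (Ev 0 - Ev 1) + (x 1 + x 2 + 2 * t) • (Ev 1 - Ev 2)
      + (x 1 + x 2 + x 3 + 3 * t) • (Ev 2 - Ev 3)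
      + (x 1 + x 2 + x 3 + x 4 + 4 * t) • (Ev 3 - Ev 4)
      + (x 1 + x 2 + x 3 + x 4 + x 5 + 5 * t) • (Ev 4 - Ev 5)
      + t • ((2 : ℤ) • Lv - ∑ i : Fin 6, Ev i) := by
    funext j
    fin_cases j <;> simp [Ev, Lv, Fin.sum_univ_six] <;> omega
  rw [hx]
  have mem : ∀ v ∈ configA1A5c, ∀ c : ℤ, c • v ∈ AddSubgroup.closure configA1A5c :=
    fun v hv c => zsmul_mem (AddSubgroup.subset_closure hv) c
  refine add_mem (add_mem (add_mem (add_mem (add_mem ?_ ?_) ?_) ?_) ?_) ?_ <;>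
    exact mem _ (by simp [configA1A5c]) _

lemma ker_degreeParity : degreeParity.ker = AddSubgroup.closure configA1A5c := by
  apply le_antisymm
  · intro x hx
    have h := AddMonoidHom.mem_ker.mp hx
    refine mem_closure_configA1A5c (neg_eq_zero.mp (congrArg Prod.fst h)) ?_
    exact ZMod.intCast_eq_zero_iff_even.mp (congrArg Prod.snd h)
  · rw [AddSubgroup.closure_le]
    simp only [configA1A5c, Set.insert_subset_iff, Set.singleton_subset_iff, SetLike.mem_coe,
      AddMonoidHom.mem_ker]
    decide

/-- for the configuration type `A₁A₅c`,
`T = {E₁−E₂, E₂−E₃, E₃−E₄, E₄−E₅, E₅−E₆, 2L−E₁−⋯−E₆}`, the torsion subgroup of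
`V/⟨T⟩` is isomorphic to `ℤ/2ℤ`. -/
theorem torsion_A1A5c :
    Nonempty ((AddCommGroup.torsion
      (V ⧸ AddSubgroup.closure ({Ev 0 - Ev 1, Ev 1 - Ev 2, Ev 2 - Ev 3, Ev 3 - Ev 4,
        Ev 4 - Ev 5, (2 : ℤ) • Lv - ∑ i : Fin 6, Ev i} : Set V))) ≃+ ZMod 2) := by
  let e : (V ⧸ AddSubgroup.closure configA1A5c) ≃+ ℤ × ZMod 2 :=
    (QuotientAddGroup.quotientAddEquivOfEq ker_degreeParity.symm).trans
      (QuotientAddGroup.quotientKerEquivOfSurjective _ degreeParity_surjective)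
  exact ⟨e.torsionCongr.trans (torsionProdEquivOfIsAddTorsion isAddTorsion_of_finite)⟩
end

section
/- Let T = {E₁ − E₂, E₃ − E₄, E₅ − E₆, L − E₁ − E₂ − E₃, L − E₁ − E₅ − E₆, L − E₃ − E₄ − E₅} (the configuration type 3A₂b). Then the torsion subgroup of V/⟨T⟩, where ⟨T⟩ is the subgroup of V generated by T, is isomorphic to ℤ/3ℤ. -/
/-- The key homomorphism `V →+ ℤ × ZMod 3`. -/
def Fhom : V →+ ℤ × ZMod 3 where
  toFun x := (3 * x 0 + x 1 + x 2 + x 3 + x 4 + x 5 + x 6,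
    ((2 * x 0 + x 1 + x 2 + 2 * x 5 + 2 * x 6 : ℤ) : ZMod 3))
  map_zero' := by simp
  map_add' x y := by
    simp only [Pi.add_apply, Prod.mk_add_mk, Prod.mk.injEq]
    constructor
    · ring
    · push_cast; ring

def Tset : Set V := ({Ev 0 - Ev 1, Ev 2 - Ev 3, Ev 4 - Ev 5,
        Lv - Ev 0 - Ev 1 - Ev 2, Lv - Ev 0 - Ev 4 - Ev 5,
        Lv - Ev 2 - Ev 3 - Ev 4} : Set V)

lemma Fhom_surj : Function.Surjective Fhom := by
  rintro ⟨n, a⟩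
  obtain ⟨k, rfl⟩ := ZMod.intCast_surjective a
  refine ⟨fun j => if j = 1 then k else if j = 3 then n - k else 0, ?_⟩
  simp only [Fhom, AddMonoidHom.coe_mk, ZeroHom.coe_mk, Prod.mk.injEq]
  constructor
  · simp (config := { decide := true })
  · push_cast
    simp (config := { decide := true })

lemma closure_eq_ker : AddSubgroup.closure Tset = Fhom.ker := by
  apply le_antisymm
  · rw [AddSubgroup.closure_le]
    intro v hv
    simp only [Tset, Set.mem_insert_iff, Set.mem_singleton_iff] at hv
    rcases hv with rfl | rfl | rfl | rfl | rfl | rfl <;>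
      · simp only [SetLike.mem_coe, AddMonoidHom.mem_ker]
        decide
  · intro x hx
    simp only [AddMonoidHom.mem_ker, Fhom, AddMonoidHom.coe_mk, ZeroHom.coe_mk,
      Prod.mk_eq_zero] at hx
    obtain ⟨h1, h2⟩ := hx
    rw [ZMod.intCast_zmod_eq_zero_iff_dvd] at h2
    obtain ⟨c, hc⟩ := h2
    have hdvd : (3 : ℤ) ∣ (x 0 + x 1 + x 2 - x 3 - x 4) := by omega
    obtain ⟨m, hm⟩ := hdvd
    have hx' : x = (x 1 + (-(x 0) - x 1 - x 2 + m) + (2*x 0 + x 1 + x 2 - 2*m)) •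
          (Ev 0 - Ev 1)
        + (x 3 + (-(x 0) - x 1 - x 2 + m) + m) • (Ev 2 - Ev 3)
        + (x 5 + (2*x 0 + x 1 + x 2 - 2*m) + m) • (Ev 4 - Ev 5)
        + (-(x 0) - x 1 - x 2 + m) • (Lv - Ev 0 - Ev 1 - Ev 2)
        + (2*x 0 + x 1 + x 2 - 2*m) • (Lv - Ev 0 - Ev 4 - Ev 5)
        + m • (Lv - Ev 2 - Ev 3 - Ev 4) := by
      funext j
      simp only [Pi.add_apply, Pi.sub_apply, Pi.smul_apply, smul_eq_mul, Lv, Ev]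
      fin_cases j <;> simp (config := { decide := true }) <;> omega
    rw [hx']
    have mem : ∀ v ∈ Tset, v ∈ AddSubgroup.closure Tset := fun v hv =>
      AddSubgroup.subset_closure hv
    refine AddSubgroup.add_mem _ (AddSubgroup.add_mem _ (AddSubgroup.add_mem _
      (AddSubgroup.add_mem _ (AddSubgroup.add_mem _ ?_ ?_) ?_) ?_) ?_) ?_ <;>
    · apply AddSubgroup.zsmul_mem
      apply AddSubgroup.subset_closure
      simp [Tset]

/-- for the configuration type `3A₂b`,
`T = {E₁−E₂, E₃−E₄, E₅−E₆, L−E₁−E₂−E₃, L−E₁−E₅−E₆, L−E₃−E₄−E₅}`, the torsion subgroup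
of `V/⟨T⟩` is isomorphic to `ℤ/3ℤ`. -/
theorem torsion_3A2b :
    Nonempty ((AddCommGroup.torsion
      (V ⧸ AddSubgroup.closure ({Ev 0 - Ev 1, Ev 2 - Ev 3, Ev 4 - Ev 5,
        Lv - Ev 0 - Ev 1 - Ev 2, Lv - Ev 0 - Ev 4 - Ev 5,
        Lv - Ev 2 - Ev 3 - Ev 4} : Set V))) ≃+ ZMod 3) := by
  have e : (V ⧸ AddSubgroup.closure Tset) ≃+ ℤ × ZMod 3 :=
    (QuotientAddGroup.quotientAddEquivOfEq closure_eq_ker).trans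
      (QuotientAddGroup.quotientKerEquivOfSurjective Fhom Fhom_surj)
  set Q := V ⧸ AddSubgroup.closure Tset
  let φ : AddCommGroup.torsion Q →+ ZMod 3 :=
    (AddMonoidHom.snd ℤ (ZMod 3)).comp (e.toAddMonoidHom.comp
      (AddSubgroup.subtype (AddCommGroup.torsion Q)))
  have hinj : Function.Injective φ := by
    intro a b hab
    have h : ∀ c : AddCommGroup.torsion Q, φ c = 0 → c = 0 := by
      rintro ⟨x, hx⟩ h0
      have hfin : IsOfFinAddOrder x := hx
      obtain ⟨n, hn, hnx⟩ := isOfFinAddOrder_iff_nsmul_eq_zero.mp hfin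
      have h1 : (e x).1 = 0 := by
        have hs : n • (e x) = 0 := by rw [← map_nsmul, hnx, map_zero]
        have h1' : (n : ℤ) * (e x).1 = 0 := by
          have := congrArg Prod.fst hs
          simpa [nsmul_eq_mul] using this
        rcases mul_eq_zero.mp h1' with h | h
        · exfalso; exact hn.ne' (by exact_mod_cast h)
        · exact h
      have h2 : (e x).2 = 0 := h0
      have : e x = 0 := Prod.ext h1 h2
      have : x = 0 := by
        have := congrArg e.symm this
        simpa using this
      exact Subtype.ext this
    have := h (a - b) (by simpa [map_sub] using sub_eq_zero.mpr hab)
    exact sub_eq_zero.mp this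
  have hsurj : Function.Surjective φ := by
    intro a
    have htor : IsOfFinAddOrder (e.symm (0, a)) := by
      rw [isOfFinAddOrder_iff_nsmul_eq_zero]
      refine ⟨3, by norm_num, ?_⟩
      rw [← map_nsmul]
      have : (3 : ℕ) • ((0 : ℤ), a) = 0 := by
        ext
        · simp
        · show (3 : ℕ) • a = 0
          have h3 : ((3:ℕ) : ZMod 3) = 0 := by decide
          rw [nsmul_eq_mul, h3, zero_mul]
      rw [this, map_zero]
    refine ⟨⟨e.symm (0, a), htor⟩, ?_⟩
    show ((e (e.symm (0, a))).2) = a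
    simp
  exact ⟨AddEquiv.ofBijective φ ⟨hinj, hsurj⟩⟩
end
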